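/- arXiv:1107.1544 — 4 statements merged into one kernel-verified Lean document; each statement's English description precedes it below -/
import Mathlib

section
/- Let G be an N_b×m complex matrix with orthonormal columns (GᴴG = I_m), let H be an N_e×N_b complex matrix, u ∈ ℂ^{N_e}, and let p > 0, σ > 0 be reals. Set a = Gᴴ Hᴴ u ∈ ℂ^m, B = H G ∈ ℂ^{N_e×m}, and M = (σ²/p) I_m + Bᴴ B (which is Hermitian positive definite). Then for every c ∈ ℂ^m with cᴴc = 1, uᴴ ( p H G c cᴴ Gᴴ Hᴴ + σ² I )⁻¹ u ≥ (1/σ²) ( uᴴ u − aᴴ M⁻¹ a ), and if a ≠ 0 equality is attained at c = M⁻¹ a / ‖M⁻¹ a‖. -/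
open Matrix
open scoped ComplexOrder

/-!
With `t = B c`, the matrix `p t tᴴ + σ² I` is a rank-one perturbation of a scalar matrix, so the
Sherman–Morrison formula turns `uᴴ(p t tᴴ + σ² I)⁻¹u` into `σ⁻²(uᴴu − |cᴴa|² / cᴴMc)` for a unit
vector `c`, because then `σ² + p‖Bc‖² = p cᴴMc`. The Cauchy–Schwarz inequality for the inner
product `xᴴMy`, applied to `c` and `M⁻¹a`, bounds `|cᴴa|² / cᴴMc` by `aᴴM⁻¹a`, with equality when
`c` is a nonzero multiple of `M⁻¹a`.
-/

namespace Matrix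

section ShermanMorrison

variable {n K : Type*} [Fintype n] [DecidableEq n] [Field K]

theorem inv_smul_vecMulVec_add_smul_one {α s : K} {t w : n → K} (hs : s ≠ 0)
    (hD : s + α * (w ⬝ᵥ t) ≠ 0) :
    (α • vecMulVec t w + s • 1)⁻¹ = s⁻¹ • (1 - (α / (s + α * (w ⬝ᵥ t))) • vecMulVec t w) := by
  refine inv_eq_right_inv ?_
  simp only [Matrix.mul_smul, Matrix.smul_mul, Matrix.add_mul, Matrix.mul_sub, Matrix.mul_one,
    Matrix.one_mul, vecMulVec_mul_vecMulVec, vecMulVec_smul, smul_smul]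
  match_scalars <;> field_simp; ring

theorem dotProduct_inv_smul_vecMulVec_add_smul_one_mulVec {α s : K} {t w : n → K} (hs : s ≠ 0)
    (hD : s + α * (w ⬝ᵥ t) ≠ 0) (x y : n → K) :
    x ⬝ᵥ ((α • vecMulVec t w + s • 1)⁻¹ *ᵥ y) =
      s⁻¹ * (x ⬝ᵥ y - α * (x ⬝ᵥ t) * (w ⬝ᵥ y) / (s + α * (w ⬝ᵥ t))) := by
  rw [inv_smul_vecMulVec_add_smul_one hs hD, smul_mulVec, sub_mulVec, smul_mulVec, one_mulVec,
    vecMulVec_mulVec, op_smul_eq_smul, dotProduct_smul, dotProduct_sub, dotProduct_smul,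
    dotProduct_smul, smul_eq_mul, smul_eq_mul, smul_eq_mul]
  ring

end ShermanMorrison

section PosDef

variable {n 𝕜 : Type*} [Fintype n] [RCLike 𝕜]

theorem PosSemidef.star_dotProduct_mulVec_mul_le {M : Matrix n n 𝕜} (hM : M.PosSemidef)
    (x y : n → 𝕜) :
    star (star x ⬝ᵥ M *ᵥ y) * (star x ⬝ᵥ M *ᵥ y) ≤
      (star x ⬝ᵥ M *ᵥ x) * (star y ⬝ᵥ M *ᵥ y) := by
  let := M.toSeminormedAddCommGroup hM
  let := M.toInnerProductSpace hM
  have hinner : ∀ v w : n → 𝕜, inner 𝕜 v w = star v ⬝ᵥ M *ᵥ w := fun v w => dotProduct_comm _ _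
  have hcs := inner_mul_inner_self_le (𝕜 := 𝕜) x y
  rw [norm_inner_symm y x, hinner, hinner, hinner] at hcs
  rw [← RCLike.norm_of_nonneg' (hM.dotProduct_mulVec_nonneg x),
    ← RCLike.norm_of_nonneg' (hM.dotProduct_mulVec_nonneg y), RCLike.star_def, RCLike.conj_mul,
    ← RCLike.ofReal_pow, ← RCLike.ofReal_mul, RCLike.ofReal_le_ofReal, sq]
  exact hcs.trans (mul_le_mul (RCLike.re_le_norm _) (RCLike.re_le_norm _)
    (hM.re_dotProduct_nonneg y) (norm_nonneg _))

variable [DecidableEq n] {M : Matrix n n 𝕜}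

theorem PosDef.mulVec_inv_mulVec (hM : M.PosDef) (a : n → 𝕜) : M *ᵥ (M⁻¹ *ᵥ a) = a := by
  rw [mulVec_mulVec, mul_nonsing_inv _ ((isUnit_iff_isUnit_det M).mp hM.isUnit), one_mulVec]

theorem PosDef.star_dotProduct_inv_mulVec (hM : M.PosDef) (a : n → 𝕜) :
    star a ⬝ᵥ M⁻¹ *ᵥ a = star (M⁻¹ *ᵥ a) ⬝ᵥ M *ᵥ (M⁻¹ *ᵥ a) := by
  conv_lhs => rw [← hM.mulVec_inv_mulVec a]
  rw [star_mulVec, ← dotProduct_mulVec, hM.isHermitian.eq, hM.mulVec_inv_mulVec]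

theorem PosDef.inv_mulVec_ne_zero (hM : M.PosDef) {a : n → 𝕜} (ha : a ≠ 0) : M⁻¹ *ᵥ a ≠ 0 :=
  fun h => ha (by rw [← hM.mulVec_inv_mulVec a, h, mulVec_zero])

theorem PosDef.star_dotProduct_mul_div_le (hM : M.PosDef) (a : n → 𝕜) {c : n → 𝕜} (hc : c ≠ 0) :
    star (star c ⬝ᵥ a) * (star c ⬝ᵥ a) / (star c ⬝ᵥ M *ᵥ c) ≤ star a ⬝ᵥ M⁻¹ *ᵥ a := by
  rw [div_le_iff₀ (hM.dotProduct_mulVec_pos hc)]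
  set d := M⁻¹ *ᵥ a
  calc star (star c ⬝ᵥ a) * (star c ⬝ᵥ a)
      = star (star c ⬝ᵥ M *ᵥ d) * (star c ⬝ᵥ M *ᵥ d) := by rw [hM.mulVec_inv_mulVec]
    _ ≤ (star c ⬝ᵥ M *ᵥ c) * (star d ⬝ᵥ M *ᵥ d) := hM.posSemidef.star_dotProduct_mulVec_mul_le c d
    _ = (star a ⬝ᵥ M⁻¹ *ᵥ a) * (star c ⬝ᵥ M *ᵥ c) := by
      rw [mul_comm, hM.star_dotProduct_inv_mulVec]

theorem PosDef.star_dotProduct_mul_div_eq_of_eq_smul (hM : M.PosDef) {a : n → 𝕜} (ha : a ≠ 0)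
    {k : 𝕜} (hk : k ≠ 0) {c : n → 𝕜} (hc : c = k • M⁻¹ *ᵥ a) :
    star (star c ⬝ᵥ a) * (star c ⬝ᵥ a) / (star c ⬝ᵥ M *ᵥ c) = star a ⬝ᵥ M⁻¹ *ᵥ a := by
  rw [hM.star_dotProduct_inv_mulVec]
  have hd0 := hM.inv_mulVec_ne_zero ha
  set d := M⁻¹ *ᵥ a
  set q := star d ⬝ᵥ M *ᵥ d
  have hq : 0 < q := hM.dotProduct_mulVec_pos hd0
  have hq_star : star q = q := (IsSelfAdjoint.of_nonneg hq.le).star_eq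
  have hca : star c ⬝ᵥ a = star k * q := by
    rw [hc, star_smul, smul_dotProduct, ← hM.mulVec_inv_mulVec a, smul_eq_mul]
  have hcMc : star c ⬝ᵥ M *ᵥ c = star k * k * q := by
    rw [hc, mulVec_smul, star_smul, smul_dotProduct, dotProduct_smul, smul_eq_mul, smul_eq_mul]
    ring
  rw [hca, hcMc, star_mul', star_star, hq_star]
  field_simp [star_ne_zero.mpr hk, hk, hq.ne']

end PosDef

theorem mul_vecMulVec_star_mul_conjTranspose {m n R : Type*} [Fintype n] [NonUnitalSemiring R]
    [StarRing R] (B : Matrix m n R) (c : n → R) :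
    B * vecMulVec c (star c) * Bᴴ = vecMulVec (B *ᵥ c) (star (B *ᵥ c)) := by
  rw [mul_vecMulVec, vecMulVec_mul, star_mulVec]

end Matrix

section Beamforming

variable {m n : Type*} [Fintype m] [Fintype n]

theorem star_dotProduct_inv_jamming_mulVec [DecidableEq m] [DecidableEq n] (B : Matrix m n ℂ)
    (u : m → ℂ) {c : n → ℂ} (hc : star c ⬝ᵥ c = 1) {p s : ℝ} (hp : 0 < p) (hs : 0 < s) :
    star u ⬝ᵥ (((p : ℂ) • (B * vecMulVec c (star c) * Bᴴ) + (s : ℂ) • 1)⁻¹ *ᵥ u) =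
      (s : ℂ)⁻¹ * (star u ⬝ᵥ u - star (star c ⬝ᵥ Bᴴ *ᵥ u) * (star c ⬝ᵥ Bᴴ *ᵥ u) /
        (star c ⬝ᵥ (((s / p : ℝ) : ℂ) • 1 + Bᴴ * B) *ᵥ c)) := by
  rw [mul_vecMulVec_star_mul_conjTranspose]
  set t := B *ᵥ c
  have hp' : (0 : ℂ) < p := by exact_mod_cast hp
  have hD : 0 < (s : ℂ) + p * (star t ⬝ᵥ t) :=
    add_pos_of_pos_of_nonneg (by exact_mod_cast hs)
      (mul_nonneg hp'.le (dotProduct_star_self_nonneg t))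
  have hcMc :
      (s : ℂ) + p * (star t ⬝ᵥ t) = p * (star c ⬝ᵥ (((s / p : ℝ) : ℂ) • 1 + Bᴴ * B) *ᵥ c) := by
    have htt : star c ⬝ᵥ (Bᴴ * B) *ᵥ c = star t ⬝ᵥ t := by
      rw [← mulVec_mulVec, dotProduct_mulVec, ← star_mulVec]
    rw [add_mulVec, smul_mulVec, one_mulVec, dotProduct_add, dotProduct_smul, hc, htt, smul_eq_mul,
      mul_one]
    push_cast
    field_simp
  have htu : star t ⬝ᵥ u = star c ⬝ᵥ Bᴴ *ᵥ u := by rw [star_mulVec, ← dotProduct_mulVec]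
  rw [dotProduct_inv_smul_vecMulVec_add_smul_one_mulVec (by exact_mod_cast hs.ne') hD.ne',
    star_dotProduct u t, htu, hcMc, mul_assoc, mul_div_mul_left _ _ hp'.ne']

theorem star_dotProduct_self_of_eq_inv_sqrt_smul {v c : n → ℂ} (hv : v ≠ 0)
    (hc : c = ((√(star v ⬝ᵥ v).re : ℝ) : ℂ)⁻¹ • v) : star c ⬝ᵥ c = 1 := by
  have hpos : 0 < star v ⬝ᵥ v := dotProduct_star_self_pos_iff.mpr hv
  set r := (star v ⬝ᵥ v).re
  have hr : 0 < r := (Complex.pos_iff.mp hpos).1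
  have hvr : star v ⬝ᵥ v = r := Complex.eq_re_of_ofReal_le (r := 0) (by simp [hpos.le])
  rw [hc, star_smul, smul_dotProduct, dotProduct_smul, hvr, smul_eq_mul, smul_eq_mul,
    ← Complex.ofReal_inv, Complex.star_def, Complex.conj_ofReal]
  norm_cast
  rw [← mul_assoc, ← mul_inv, Real.mul_self_sqrt hr.le, inv_mul_cancel₀ hr.ne']

end Beamforming

theorem optimal_jamming_beamformer_in_subspace_general
    (Nb Ne m : ℕ) (G : Matrix (Fin Nb) (Fin m) ℂ)
    (H : Matrix (Fin Ne) (Fin Nb) ℂ) (u : Fin Ne → ℂ) (p σ : ℝ) (hp : 0 < p) (hσ : 0 < σ)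
    (a : Fin m → ℂ) (ha : a = (Gᴴ * Hᴴ) *ᵥ u)
    (B : Matrix (Fin Ne) (Fin m) ℂ) (hB : B = H * G)
    (M : Matrix (Fin m) (Fin m) ℂ) (hM : M = ((σ ^ 2 / p : ℝ) : ℂ) • 1 + Bᴴ * B) :
    (∀ c : Fin m → ℂ, star c ⬝ᵥ c = 1 →
      ((σ ^ 2 : ℝ) : ℂ)⁻¹ * (star u ⬝ᵥ u - star a ⬝ᵥ (M⁻¹ *ᵥ a)) ≤
        star u ⬝ᵥ
          (((p : ℂ) • (B * vecMulVec c (star c) * Bᴴ) + ((σ ^ 2 : ℝ) : ℂ) • 1)⁻¹ *ᵥ u)) ∧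
    (a ≠ 0 →
      ∀ c : Fin m → ℂ,
        c = ((Real.sqrt ((star (M⁻¹ *ᵥ a) ⬝ᵥ (M⁻¹ *ᵥ a)).re) : ℝ) : ℂ)⁻¹ • (M⁻¹ *ᵥ a) →
        star u ⬝ᵥ
            (((p : ℂ) • (B * vecMulVec c (star c) * Bᴴ) + ((σ ^ 2 : ℝ) : ℂ) • 1)⁻¹ *ᵥ u) =
          ((σ ^ 2 : ℝ) : ℂ)⁻¹ * (star u ⬝ᵥ u - star a ⬝ᵥ (M⁻¹ *ᵥ a))) := by
  rw [← conjTranspose_mul, ← hB] at ha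
  subst ha hM
  have hs : 0 < σ ^ 2 := by positivity
  have hMpos : (((σ ^ 2 / p : ℝ) : ℂ) • 1 + Bᴴ * B).PosDef :=
    (PosDef.one.smul (by exact_mod_cast div_pos hs hp)).add_posSemidef
      (posSemidef_conjTranspose_mul_self B)
  refine ⟨fun c hc => ?_, fun ha c hc => ?_⟩
  · have hc0 : c ≠ 0 := by rintro rfl; simp at hc
    rw [star_dotProduct_inv_jamming_mulVec B u hc hp hs]
    exact mul_le_mul_of_nonneg_left (sub_le_sub_left (hMpos.star_dotProduct_mul_div_le _ hc0) _)
      (inv_nonneg.mpr (by exact_mod_cast hs.le))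
  · have hc1 := star_dotProduct_self_of_eq_inv_sqrt_smul (hMpos.inv_mulVec_ne_zero ha) hc
    have hc0 : c ≠ 0 := by rintro rfl; simp at hc1
    have hk := left_ne_zero_of_smul (hc ▸ hc0)
    rw [star_dotProduct_inv_jamming_mulVec B u hc1 hp hs,
      hMpos.star_dotProduct_mul_div_eq_of_eq_smul ha hk hc]

/-- Equations (16)–(22) of the paper: among all unit-norm jamming beamformers `t′ = G c`
lying in the range of `G` (which has orthonormal columns), the quantity
`uᴴ(p H G c cᴴ Gᴴ Hᴴ + σ² I)⁻¹ u` is bounded below by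
`(1/σ²)(uᴴu − aᴴ M⁻¹ a)` where `a = Gᴴ Hᴴ u`, `B = H G`, `M = (σ²/p) I + Bᴴ B`,
with equality at `c = M⁻¹ a / ‖M⁻¹ a‖` when `a ≠ 0`  (‖·‖ is the Euclidean norm). -/
theorem optimal_jamming_beamformer_in_subspace
    (Nb Ne m : ℕ) (G : Matrix (Fin Nb) (Fin m) ℂ) (hG : Gᴴ * G = 1)
    (H : Matrix (Fin Ne) (Fin Nb) ℂ) (u : Fin Ne → ℂ) (p σ : ℝ) (hp : 0 < p) (hσ : 0 < σ)
    (a : Fin m → ℂ) (ha : a = (Gᴴ * Hᴴ) *ᵥ u)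
    (B : Matrix (Fin Ne) (Fin m) ℂ) (hB : B = H * G)
    (M : Matrix (Fin m) (Fin m) ℂ) (hM : M = ((σ ^ 2 / p : ℝ) : ℂ) • 1 + Bᴴ * B) :
    (∀ c : Fin m → ℂ, star c ⬝ᵥ c = 1 →
      ((σ ^ 2 : ℝ) : ℂ)⁻¹ * (star u ⬝ᵥ u - star a ⬝ᵥ (M⁻¹ *ᵥ a)) ≤
        star u ⬝ᵥ
          (((p : ℂ) • (B * vecMulVec c (star c) * Bᴴ) + ((σ ^ 2 : ℝ) : ℂ) • 1)⁻¹ *ᵥ u)) ∧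
    (a ≠ 0 →
      ∀ c : Fin m → ℂ,
        c = ((Real.sqrt ((star (M⁻¹ *ᵥ a) ⬝ᵥ (M⁻¹ *ᵥ a)).re) : ℝ) : ℂ)⁻¹ • (M⁻¹ *ᵥ a) →
        star u ⬝ᵥ
            (((p : ℂ) • (B * vecMulVec c (star c) * Bᴴ) + ((σ ^ 2 : ℝ) : ℂ) • 1)⁻¹ *ᵥ u) =
          ((σ ^ 2 : ℝ) : ℂ)⁻¹ * (star u ⬝ᵥ u - star a ⬝ᵥ (M⁻¹ *ᵥ a))) :=
  optimal_jamming_beamformer_in_subspace_general Nb Ne m G H u p σ hp hσ a ha B hB M hM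
end

section
/- Let k > 0 and p > 0 be reals, set α₁ = 1/(1 + k p) and α₂ = k p/(1 + k p), and define g : (0,∞) → ℝ by g(x) = (1/α₁)^{α₁} · (k x / α₂)^{α₂}. Then g(p) = 1 + k p and the derivative of g at p equals k; that is, g agrees to first order at p with the function f(x) = 1 + k x. -/
/-! With `s = 1 + k p`, the condensed monomial is `g x = s · (x / p) ^ α₂`, because
`(1/α₁)^α₁ = s ^ α₁`, `k x / α₂ = s · (x / p)` and `α₁ + α₂ = 1`. Its value at `p` is `s`, and its
derivative there is `s α₂ / p = k`: the exponent `α₂ = p f'(p) / f(p)` is the elasticity of `f`. -/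

open Filter

lemma Real.rpow_mul_mul_rpow_of_add_eq_one {s y a b : ℝ} (hs : 0 < s) (hy : 0 ≤ y)
    (hab : a + b = 1) : s ^ a * (s * y) ^ b = s * y ^ b := by
  rw [Real.mul_rpow hs.le hy, ← mul_assoc, ← Real.rpow_add hs, hab, Real.rpow_one]

lemma hasDerivAt_const_mul_div_rpow (s a : ℝ) {p : ℝ} (hp : p ≠ 0) :
    HasDerivAt (fun x => s * (x / p) ^ a) (s * a / p) p := by
  have hpow : HasDerivAt (fun x => (x / p) ^ a) (1 / p * a * (p / p) ^ (a - 1)) p :=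
    ((hasDerivAt_id' p).div_const p).rpow_const (Or.inl (by simp [hp]))
  rw [div_self hp, Real.one_rpow] at hpow
  exact (hpow.const_mul s).congr_deriv (by ring)

/-- Best local monomial approximation claim in Lemma 2 of the paper: with
`α₁ = 1/(1+kp)`, `α₂ = kp/(1+kp)`, the condensed monomial
`g(x) = (1/α₁)^{α₁} (k x/α₂)^{α₂}` satisfies `g(p) = 1 + kp` and `g′(p) = k`,
i.e. `g` agrees to first order at `p` with `f(x) = 1 + kx`. -/
theorem condensed_monomial_tangent
    (k p : ℝ) (hk : 0 < k) (hp : 0 < p)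
    (α₁ α₂ : ℝ) (hα₁ : α₁ = 1 / (1 + k * p)) (hα₂ : α₂ = k * p / (1 + k * p))
    (g : ℝ → ℝ) (hg : ∀ x, g x = (1 / α₁) ^ α₁ * (k * x / α₂) ^ α₂) :
    g p = 1 + k * p ∧ HasDerivAt g k p := by
  have hkp : 0 < k * p := mul_pos hk hp
  have hs : 0 < 1 + k * p := by positivity
  have hsum : α₁ + α₂ = 1 := by
    rw [hα₁, hα₂]; field_simp
  have hform : ∀ x, 0 < x → g x = (1 + k * p) * (x / p) ^ α₂ := by
    intro x hx
    have hinv : 1 / α₁ = 1 + k * p := by rw [hα₁]; field_simp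
    have hbase : k * x / α₂ = (1 + k * p) * (x / p) := by rw [hα₂]; field_simp
    rw [hg, hinv, hbase, Real.rpow_mul_mul_rpow_of_add_eq_one hs (by positivity) hsum]
  refine ⟨by rw [hform p hp, div_self hp.ne', Real.one_rpow, mul_one], ?_⟩
  have hslope : (1 + k * p) * α₂ / p = k := by rw [hα₂]; field_simp
  rw [← hslope]
  exact (hasDerivAt_const_mul_div_rpow _ _ hp.ne').congr_of_eventuallyEq
    (eventually_of_mem (Ioi_mem_nhds hp) hform)
end

section
/- Let N_r, N_a, s be positive integers with s ≤ N_r and s ≤ N_a. Let U ∈ ℂ^{N_r×N_r} and Ψ ∈ ℂ^{N_a×N_a} be unitary, let R ∈ ℂ^{s×s} be invertible, let s_1,…,s_s ≥ 0 be reals and let S ∈ ℂ^{N_r×s} be the rectangular diagonal matrix with S_{ij} = s_i if i = j and 0 otherwise. Define H = U · S · [R | 0_{s×(N_a−s)}] · Ψᴴ ∈ ℂ^{N_r×N_a} and T = (1/‖R⁻¹‖_F) · Ψ · [R⁻¹ ; 0_{(N_a−s)×s}] ∈ ℂ^{N_a×s}. Let p_1,…,p_s ≥ 0 and Q = diag(p_1,…,p_s),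 and let σ > 0. Then det( I_{N_r} + (1/σ²) H T Q Tᴴ Hᴴ ) = ∏_{i=1}^s ( 1 + p_i s_i² / (σ² ‖R⁻¹‖_F²) ). -/
open Matrix
open scoped ComplexOrder

/-- The Frobenius norm of a complex matrix, `‖A‖_F = (∑_{i,j} |a_{ij}|²)^{1/2}`. -/
noncomputable def frobNorm {m n : ℕ} (A : Matrix (Fin m) (Fin n) ℂ) : ℝ :=
  Real.sqrt (∑ i, ∑ j, ‖A i j‖ ^ 2)

/-- Horizontal block concatenation `[R | 0] ∈ ℂ^{s×Na}` of `R ∈ ℂ^{s×s}` with a zero block. -/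
def hcatZero {s Na : ℕ} (hsa : s ≤ Na) (R : Matrix (Fin s) (Fin s) ℂ) :
    Matrix (Fin s) (Fin Na) ℂ :=
  Matrix.of fun i j => if h : (j : ℕ) < s then R i ⟨j, h⟩ else 0

/-- Vertical block concatenation `[R ; 0] ∈ ℂ^{Na×s}` of `R ∈ ℂ^{s×s}` with a zero block. -/
def vcatZero {s Na : ℕ} (hsa : s ≤ Na) (R : Matrix (Fin s) (Fin s) ℂ) :
    Matrix (Fin Na) (Fin s) ℂ :=
  Matrix.of fun i j => if h : (i : ℕ) < s then R ⟨i, h⟩ j else 0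


/-!
Because `Ψᴴ Ψ = I` and `[R | 0] [R⁻¹ ; 0] = R R⁻¹ = I`, the product `H T` collapses to
`U S / ‖R⁻¹‖_F`. Sylvester's identity `det (I + A Q Aᴴ) = det (I + Q Aᴴ A)` then moves the
determinant to the `s × s` side, where `(U S)ᴴ (U S) = Sᴴ S = diag (sᵢ²)` because `U` is unitary,
so the determinant is that of a diagonal matrix.
-/

theorem hcatZero_mul_vcatZero {s Na : ℕ} (hsa : s ≤ Na) (A B : Matrix (Fin s) (Fin s) ℂ) :
    hcatZero hsa A * vcatZero hsa B = A * B := by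
  ext i j
  refine (Fintype.sum_of_injective (Fin.castLE hsa) (Fin.castLE_injective hsa) _ _
    (fun k hk => ?_) (fun k => by simp [hcatZero, vcatZero])).symm
  have hks : ¬ (k : ℕ) < s := fun h => hk ⟨⟨k, h⟩, rfl⟩
  simp [hcatZero, hks]

theorem conjTranspose_mul_self_of_rectDiagonal {α : Type*} [NonUnitalNonAssocSemiring α]
    [StarRing α] {m s : ℕ} (hsm : s ≤ m) (d : Fin s → α) (S : Matrix (Fin m) (Fin s) α)
    (hS : ∀ i j, S i j = if (i : ℕ) = (j : ℕ) then d j else 0) :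
    Sᴴ * S = diagonal fun j => star (d j) * d j := by
  ext j k
  rw [mul_apply, Finset.sum_eq_single (Fin.castLE hsm j)]
  · by_cases hjk : j = k
    · simp [hS, hjk]
    · simp [hS, hjk, Fin.val_ne_iff.mpr hjk]
  · intro i _ hi
    have hij : (i : ℕ) ≠ j := fun h => hi (Fin.ext h)
    simp [hS, hij]
  · simp

theorem det_one_add_mul_diagonal_mul_conjTranspose {m n α : Type*} [Fintype m] [DecidableEq m]
    [Fintype n] [DecidableEq n] [CommRing α] [StarRing α] (A : Matrix m n α) (q w : n → α)
    (hA : Aᴴ * A = diagonal w) :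
    det (1 + A * diagonal q * Aᴴ) = ∏ i, (1 + q i * w i) := by
  rw [Matrix.mul_assoc, det_one_add_mul_comm, Matrix.mul_assoc, hA, diagonal_mul_diagonal,
    ← diagonal_one, diagonal_add, det_diagonal]

theorem gsvd_relaying_determinant_general
    (Nr Na s : ℕ) (hsr : s ≤ Nr) (hsa : s ≤ Na)
    (U : Matrix (Fin Nr) (Fin Nr) ℂ) (hU : U ∈ Matrix.unitaryGroup (Fin Nr) ℂ)
    (Ψ : Matrix (Fin Na) (Fin Na) ℂ) (hΨ : Ψ ∈ Matrix.unitaryGroup (Fin Na) ℂ)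
    (R : Matrix (Fin s) (Fin s) ℂ) (hR : IsUnit R)
    (sv : Fin s → ℝ)
    (S : Matrix (Fin Nr) (Fin s) ℂ)
    (hS : ∀ i j, S i j = if (i : ℕ) = (j : ℕ) then (sv j : ℂ) else 0)
    (p : Fin s → ℝ) (σ : ℝ)
    (H : Matrix (Fin Nr) (Fin Na) ℂ) (hH : H = U * S * hcatZero hsa R * Ψᴴ)
    (T : Matrix (Fin Na) (Fin s) ℂ)
    (hT : T = ((frobNorm R⁻¹ : ℝ) : ℂ)⁻¹ • (Ψ * vcatZero hsa R⁻¹)) :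
    (1 + ((σ ^ 2 : ℝ) : ℂ)⁻¹ •
        (H * T * Matrix.diagonal (fun i => (p i : ℂ)) * Tᴴ * Hᴴ)).det =
      ((∏ i, (1 + p i * sv i ^ 2 / (σ ^ 2 * frobNorm R⁻¹ ^ 2)) : ℝ) : ℂ) := by
  set c : ℂ := (frobNorm R⁻¹ : ℂ)
  have hU' : Uᴴ * U = 1 := Unitary.star_mul_self_of_mem hU
  have hΨ' : Ψᴴ * Ψ = 1 := Unitary.star_mul_self_of_mem hΨ
  have hHT : H * T = c⁻¹ • (U * S) := by
    rw [hH, hT, Matrix.mul_smul, Matrix.mul_assoc _ Ψᴴ, ← Matrix.mul_assoc Ψᴴ, hΨ',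
      Matrix.one_mul, Matrix.mul_assoc (U * S), hcatZero_mul_vcatZero,
      mul_nonsing_inv _ ((isUnit_iff_isUnit_det R).mp hR), Matrix.mul_one]
  have hGram : (U * S)ᴴ * (U * S) = diagonal fun j => star (sv j : ℂ) * sv j := by
    rw [conjTranspose_mul, Matrix.mul_assoc, ← Matrix.mul_assoc Uᴴ, hU', Matrix.one_mul,
      conjTranspose_mul_self_of_rectDiagonal hsr _ S hS]
  have hInner : ((σ ^ 2 : ℝ) : ℂ)⁻¹ • (H * T * diagonal (fun i => (p i : ℂ)) * Tᴴ * Hᴴ) =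
      U * S * diagonal (fun i => ((σ ^ 2 : ℝ) : ℂ)⁻¹ * c⁻¹ * c⁻¹ * p i) * (U * S)ᴴ := by
    have hc : star c⁻¹ = c⁻¹ := by simp [c, Complex.conj_ofReal]
    rw [Matrix.mul_assoc _ Tᴴ, ← conjTranspose_mul, hHT, conjTranspose_smul, hc,
      show (fun i => ((σ ^ 2 : ℝ) : ℂ)⁻¹ * c⁻¹ * c⁻¹ * p i) =
        (((σ ^ 2 : ℝ) : ℂ)⁻¹ * c⁻¹ * c⁻¹) • fun i => (p i : ℂ) from rfl, diagonal_smul]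
    simp only [Matrix.smul_mul, Matrix.mul_smul, smul_smul, mul_assoc]
  rw [hInner, det_one_add_mul_diagonal_mul_conjTranspose _ _ _ hGram, Complex.ofReal_prod]
  refine Finset.prod_congr rfl fun i _ => ?_
  simp only [Complex.star_def, Complex.conj_ofReal, c]
  push_cast
  ring

/-- The computation underlying Proposition 1 of the paper: with
`H = U S [R | 0] Ψᴴ` (GSVD form) and the GSVD-based transmit beamformer
`T = (1/‖R⁻¹‖_F) Ψ [R⁻¹ ; 0]`, and diagonal power loading `Q = diag(p₁,…,p_s)`,
`det(I + (1/σ²) H T Q Tᴴ Hᴴ) = ∏ᵢ (1 + pᵢ sᵢ²/(σ² ‖R⁻¹‖_F²))`. -/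
theorem gsvd_relaying_determinant
    (Nr Na s : ℕ) (hs : 0 < s) (hsr : s ≤ Nr) (hsa : s ≤ Na)
    (U : Matrix (Fin Nr) (Fin Nr) ℂ) (hU : U ∈ Matrix.unitaryGroup (Fin Nr) ℂ)
    (Ψ : Matrix (Fin Na) (Fin Na) ℂ) (hΨ : Ψ ∈ Matrix.unitaryGroup (Fin Na) ℂ)
    (R : Matrix (Fin s) (Fin s) ℂ) (hR : IsUnit R)
    (sv : Fin s → ℝ) (hsv : ∀ i, 0 ≤ sv i)
    (S : Matrix (Fin Nr) (Fin s) ℂ)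
    (hS : ∀ i j, S i j = if (i : ℕ) = (j : ℕ) then (sv j : ℂ) else 0)
    (p : Fin s → ℝ) (hp : ∀ i, 0 ≤ p i) (σ : ℝ) (hσ : 0 < σ)
    (H : Matrix (Fin Nr) (Fin Na) ℂ) (hH : H = U * S * hcatZero hsa R * Ψᴴ)
    (T : Matrix (Fin Na) (Fin s) ℂ)
    (hT : T = ((frobNorm R⁻¹ : ℝ) : ℂ)⁻¹ • (Ψ * vcatZero hsa R⁻¹)) :
    (1 + ((σ ^ 2 : ℝ) : ℂ)⁻¹ •
        (H * T * Matrix.diagonal (fun i => (p i : ℂ)) * Tᴴ * Hᴴ)).det =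
      ((∏ i, (1 + p i * sv i ^ 2 / (σ ^ 2 * frobNorm R⁻¹ ^ 2)) : ℝ) : ℂ) :=
  gsvd_relaying_determinant_general Nr Na s hsr hsa U hU Ψ hΨ R hR sv S hS p σ H hH T hT
end

section
/- Let N_e, N_a, N_r, s be positive integers with s ≤ N_e, s ≤ N_a and s ≤ N_r. Let V_a ∈ ℂ^{N_e×N_e}, Ψ_a ∈ ℂ^{N_a×N_a}, V_r ∈ ℂ^{N_e×N_e}, Ψ_r ∈ ℂ^{N_r×N_r} be unitary; let R_a, R_r ∈ ℂ^{s×s} be invertible; let s_{ae,1},…,s_{ae,s} ≥ 0 and s_{re,1},…,s_{re,s} ≥ 0 be reals, and let S_{ae}, S_{re} ∈ ℂ^{N_e×s} be the rectangular diagonal matrices with (S_{ae})_{ii} = s_{ae,i}, (S_{re})_{ii} = s_{re,i} and zeros elsewhere. Define H_{ae} = V_a S_{ae} [R_a | 0] Ψ_aᴴ, H_{re} = V_r S_{re} [R_r | 0] Ψ_rᴴ, T_a = (1/‖R_a⁻¹‖_F) Ψ_a [R_a⁻¹ ; 0], T_r = (1/‖R_r⁻¹‖_F) Ψ_r [R_r⁻¹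 ; 0]. Let p_{a,1},…,p_{a,s} ≥ 0 and p_{r,1},…,p_{r,s} ≥ 0, set D_a = diag(√p_{a,1},…,√p_{a,s}), D_r = diag(√p_{r,1},…,√p_{r,s}), and let H̃ ∈ ℂ^{2N_e×s} be the vertical stack [H_{ae} T_a D_a ; H_{re} T_r D_r]. Then for every σ > 0, det( I_{2N_e} + (1/σ²) H̃ H̃ᴴ ) = ∏_{i=1}^s ( 1 + p_{a,i} s_{ae,i}² / (σ² ‖R_a⁻¹‖_F²) + p_{r,i} s_{re,i}² / (σ² ‖R_r⁻¹‖_F²) ). -/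
/-!
The GSVD beamformer inverts the common factor of each phase: `[R | 0] Ψᴴ Ψ [R⁻¹ ; 0] = I`, so
the effective channel `H T D` of a phase collapses to `‖R⁻¹‖_F⁻¹ V S D`. As `V` is unitary and `S`
is rectangular diagonal, its Gram matrix is diagonal, and the Gram matrix of the stacked channel
`H̃` is the sum of the two. Sylvester's identity `det (I + σ⁻² H̃ H̃ᴴ) = det (I + σ⁻² H̃ᴴ H̃)` then
turns the determinant into the product of the diagonal entries.
-/

open Matrix
open scoped ComplexOrder

namespace Matrix

lemma conjTranspose_mul_self_of_rectangular_diagonal {α : Type*} [NonUnitalNonAssocSemiring α]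
    [StarRing α] {N s : ℕ} (h : s ≤ N) (v : Fin s → α) (S : Matrix (Fin N) (Fin s) α)
    (hS : ∀ i j, S i j = if (i : ℕ) = (j : ℕ) then v j else 0) :
    Sᴴ * S = diagonal fun i => star (v i) * v i := by
  ext i j
  rw [mul_apply, Finset.sum_eq_single (Fin.castLE h i)]
  · by_cases hij : i = j
    · subst hij; simp [hS]
    · have : (i : ℕ) ≠ j := Fin.val_ne_of_ne hij
      simp [hS, this, hij]
  · intro k _ hk
    have : (k : ℕ) ≠ i := fun hc => hk (Fin.ext hc)
    simp [hS, this]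
  · simp

lemma conjTranspose_mul_self_unitary_mul {m n α : Type*} [Fintype m] [DecidableEq m] [Fintype n]
    [CommRing α] [StarRing α] {U : Matrix m m α} (hU : U ∈ unitaryGroup m α) (M : Matrix m n α) :
    (U * M)ᴴ * (U * M) = Mᴴ * M := by
  rw [conjTranspose_mul, Matrix.mul_assoc, ← Matrix.mul_assoc Uᴴ, ← star_eq_conjTranspose,
    Unitary.star_mul_self_of_mem hU, Matrix.one_mul]

lemma det_one_add_smul_mul_comm {m n α : Type*} [Fintype m] [DecidableEq m]
    [Fintype n] [DecidableEq n] [CommRing α] (c : α) (A : Matrix m n α) (B : Matrix n m α) :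
    det (1 + c • (A * B)) = det (1 + c • (B * A)) := by
  rw [← Matrix.mul_smul, det_one_add_mul_comm, smul_mul]

lemma det_one_add_smul_diagonal {n α : Type*} [Fintype n] [DecidableEq n] [CommRing α]
    (c : α) (d : n → α) : det (1 + c • diagonal d) = ∏ i, (1 + c * d i) := by
  rw [← diagonal_one, ← diagonal_smul, diagonal_add, det_diagonal]
  rfl

end Matrix

lemma hcatZero_mul_vcatZero_s8 {s N : ℕ} (h : s ≤ N) (R R' : Matrix (Fin s) (Fin s) ℂ) :
    hcatZero h R * vcatZero h R' = R * R' := by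
  ext i j
  refine (Fintype.sum_of_injective (Fin.castLE h) (Fin.castLE_injective h) _ _ ?_ ?_).symm
  · intro k hk
    have hks : ¬ (k : ℕ) < s := fun hlt => hk ⟨⟨k, hlt⟩, rfl⟩
    simp [hcatZero, hks]
  · intro k
    simp [hcatZero, vcatZero]

lemma hcatZero_mul_conjTranspose_mul_mul_vcatZero_inv {s N : ℕ} (h : s ≤ N)
    {R : Matrix (Fin s) (Fin s) ℂ} (hR : IsUnit R) {Ψ : Matrix (Fin N) (Fin N) ℂ}
    (hΨ : Ψ ∈ unitaryGroup (Fin N) ℂ) :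
    hcatZero h R * (Ψᴴ * (Ψ * vcatZero h R⁻¹)) = 1 := by
  rw [← Matrix.mul_assoc Ψᴴ, ← star_eq_conjTranspose,
    Unitary.star_mul_self_of_mem hΨ, Matrix.one_mul, hcatZero_mul_vcatZero_s8,
    mul_nonsing_inv R ((isUnit_iff_isUnit_det R).mp hR)]

lemma gram_gsvd_precoded_channel {Ne N s : ℕ} (hse : s ≤ Ne) (h : s ≤ N)
    {V : Matrix (Fin Ne) (Fin Ne) ℂ} (hV : V ∈ unitaryGroup (Fin Ne) ℂ)
    {Ψ : Matrix (Fin N) (Fin N) ℂ} (hΨ : Ψ ∈ unitaryGroup (Fin N) ℂ)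
    {R : Matrix (Fin s) (Fin s) ℂ} (hR : IsUnit R) {v p : Fin s → ℝ} (hp : ∀ i, 0 ≤ p i)
    {S : Matrix (Fin Ne) (Fin s) ℂ}
    (hS : ∀ i j, S i j = if (i : ℕ) = (j : ℕ) then (v j : ℂ) else 0)
    {H : Matrix (Fin Ne) (Fin N) ℂ} (hH : H = V * S * hcatZero h R * Ψᴴ)
    {T : Matrix (Fin N) (Fin s) ℂ} (hT : T = ((frobNorm R⁻¹ : ℝ) : ℂ)⁻¹ • (Ψ * vcatZero h R⁻¹))
    {D : Matrix (Fin s) (Fin s) ℂ} (hD : D = diagonal fun i => (Real.sqrt (p i) : ℂ)) :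
    (H * T * D)ᴴ * (H * T * D) =
      diagonal fun i => ((p i * v i ^ 2 / frobNorm R⁻¹ ^ 2 : ℝ) : ℂ) := by
  have hHT : H * T = ((frobNorm R⁻¹ : ℝ) : ℂ)⁻¹ • (V * S) := by
    rw [hH, hT, Matrix.mul_smul]
    simp only [Matrix.mul_assoc]
    rw [hcatZero_mul_conjTranspose_mul_mul_vcatZero_inv h hR hΨ, Matrix.mul_one]
  have hHTD : H * T * D = ((frobNorm R⁻¹ : ℝ) : ℂ)⁻¹ • (V * (S * D)) := by
    rw [hHT, smul_mul, Matrix.mul_assoc]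
  rw [hHTD, conjTranspose_smul, smul_mul, Matrix.mul_smul, smul_smul,
    conjTranspose_mul_self_unitary_mul hV, conjTranspose_mul, Matrix.mul_assoc,
    ← Matrix.mul_assoc Sᴴ, conjTranspose_mul_self_of_rectangular_diagonal hse _ S hS, hD,
    diagonal_conjTranspose, diagonal_mul_diagonal, diagonal_mul_diagonal, ← diagonal_smul]
  congr 1
  ext i
  have hsqrt : ((Real.sqrt (p i) : ℝ) : ℂ) ^ 2 = p i := by
    rw [← Complex.ofReal_pow, Real.sq_sqrt (hp i)]
  simp only [Pi.smul_apply, Pi.star_apply, RCLike.star_def, map_inv₀, Complex.conj_ofReal,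
    smul_eq_mul]
  push_cast
  linear_combination ((v i : ℂ) ^ 2 / (frobNorm R⁻¹ : ℂ) ^ 2) * hsqrt

theorem gsvd_eavesdropper_determinant_general
    (Ne Na Nr s : ℕ) (hse : s ≤ Ne) (hsa : s ≤ Na) (hsr : s ≤ Nr)
    (Va : Matrix (Fin Ne) (Fin Ne) ℂ) (hVa : Va ∈ Matrix.unitaryGroup (Fin Ne) ℂ)
    (Ψa : Matrix (Fin Na) (Fin Na) ℂ) (hΨa : Ψa ∈ Matrix.unitaryGroup (Fin Na) ℂ)
    (Vr : Matrix (Fin Ne) (Fin Ne) ℂ) (hVr : Vr ∈ Matrix.unitaryGroup (Fin Ne) ℂ)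
    (Ψr : Matrix (Fin Nr) (Fin Nr) ℂ) (hΨr : Ψr ∈ Matrix.unitaryGroup (Fin Nr) ℂ)
    (Ra : Matrix (Fin s) (Fin s) ℂ) (hRa : IsUnit Ra)
    (Rr : Matrix (Fin s) (Fin s) ℂ) (hRr : IsUnit Rr)
    (sae sre : Fin s → ℝ)
    (Sae : Matrix (Fin Ne) (Fin s) ℂ)
    (hSae : ∀ i j, Sae i j = if (i : ℕ) = (j : ℕ) then (sae j : ℂ) else 0)
    (Sre : Matrix (Fin Ne) (Fin s) ℂ)
    (hSre : ∀ i j, Sre i j = if (i : ℕ) = (j : ℕ) then (sre j : ℂ) else 0)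
    (Hae : Matrix (Fin Ne) (Fin Na) ℂ) (hHae : Hae = Va * Sae * hcatZero hsa Ra * Ψaᴴ)
    (Hre : Matrix (Fin Ne) (Fin Nr) ℂ) (hHre : Hre = Vr * Sre * hcatZero hsr Rr * Ψrᴴ)
    (Ta : Matrix (Fin Na) (Fin s) ℂ)
    (hTa : Ta = ((frobNorm Ra⁻¹ : ℝ) : ℂ)⁻¹ • (Ψa * vcatZero hsa Ra⁻¹))
    (Tr : Matrix (Fin Nr) (Fin s) ℂ)
    (hTr : Tr = ((frobNorm Rr⁻¹ : ℝ) : ℂ)⁻¹ • (Ψr * vcatZero hsr Rr⁻¹))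
    (pa pr : Fin s → ℝ) (hpa : ∀ i, 0 ≤ pa i) (hpr : ∀ i, 0 ≤ pr i)
    (Da : Matrix (Fin s) (Fin s) ℂ) (hDa : Da = Matrix.diagonal fun i => (Real.sqrt (pa i) : ℂ))
    (Dr : Matrix (Fin s) (Fin s) ℂ) (hDr : Dr = Matrix.diagonal fun i => (Real.sqrt (pr i) : ℂ))
    (Htil : Matrix (Fin Ne ⊕ Fin Ne) (Fin s) ℂ)
    (hHtil : Htil = Matrix.fromRows (Hae * Ta * Da) (Hre * Tr * Dr)) :
    ∀ σ : ℝ, 0 < σ →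
      (1 + ((σ ^ 2 : ℝ) : ℂ)⁻¹ • (Htil * Htilᴴ)).det =
        ((∏ i, (1 + pa i * sae i ^ 2 / (σ ^ 2 * frobNorm Ra⁻¹ ^ 2)
                  + pr i * sre i ^ 2 / (σ ^ 2 * frobNorm Rr⁻¹ ^ 2)) : ℝ) : ℂ) := by
  intro σ _
  have hgram : Htilᴴ * Htil = diagonal fun i =>
      ((pa i * sae i ^ 2 / frobNorm Ra⁻¹ ^ 2 + pr i * sre i ^ 2 / frobNorm Rr⁻¹ ^ 2 : ℝ) : ℂ) := by
    rw [hHtil, conjTranspose_fromRows_eq_fromCols_conjTranspose, fromCols_mul_fromRows,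
      gram_gsvd_precoded_channel hse hsa hVa hΨa hRa hpa hSae hHae hTa hDa,
      gram_gsvd_precoded_channel hse hsr hVr hΨr hRr hpr hSre hHre hTr hDr, diagonal_add]
    push_cast
    rfl
  rw [det_one_add_smul_mul_comm, hgram, det_one_add_smul_diagonal]
  push_cast
  refine Finset.prod_congr rfl fun i _ => ?_
  ring

/-- Eavesdropper-side computation in the proof of Proposition 1 of the paper (Appendix C):
with GSVD channel decompositions `H_ae = V_a S_ae [R_a|0] Ψ_aᴴ`,
`H_re = V_r S_re [R_r|0] Ψ_rᴴ`, the GSVD beamformers `T_a, T_r`, power loadings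
`D_a = diag(√p_{a,i})`, `D_r = diag(√p_{r,i})`, and Eve's stacked two-phase channel
`H̃ = [H_ae T_a D_a ; H_re T_r D_r]`, one has
`det(I + (1/σ²) H̃ H̃ᴴ) = ∏ᵢ (1 + p_{a,i} s_{ae,i}²/(σ²‖R_a⁻¹‖_F²) + p_{r,i} s_{re,i}²/(σ²‖R_r⁻¹‖_F²))`. -/
theorem gsvd_eavesdropper_determinant
    (Ne Na Nr s : ℕ) (hs : 0 < s) (hse : s ≤ Ne) (hsa : s ≤ Na) (hsr : s ≤ Nr)
    (Va : Matrix (Fin Ne) (Fin Ne) ℂ) (hVa : Va ∈ Matrix.unitaryGroup (Fin Ne) ℂ)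
    (Ψa : Matrix (Fin Na) (Fin Na) ℂ) (hΨa : Ψa ∈ Matrix.unitaryGroup (Fin Na) ℂ)
    (Vr : Matrix (Fin Ne) (Fin Ne) ℂ) (hVr : Vr ∈ Matrix.unitaryGroup (Fin Ne) ℂ)
    (Ψr : Matrix (Fin Nr) (Fin Nr) ℂ) (hΨr : Ψr ∈ Matrix.unitaryGroup (Fin Nr) ℂ)
    (Ra : Matrix (Fin s) (Fin s) ℂ) (hRa : IsUnit Ra)
    (Rr : Matrix (Fin s) (Fin s) ℂ) (hRr : IsUnit Rr)
    (sae sre : Fin s → ℝ) (hsae : ∀ i, 0 ≤ sae i) (hsre : ∀ i, 0 ≤ sre i)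
    (Sae : Matrix (Fin Ne) (Fin s) ℂ)
    (hSae : ∀ i j, Sae i j = if (i : ℕ) = (j : ℕ) then (sae j : ℂ) else 0)
    (Sre : Matrix (Fin Ne) (Fin s) ℂ)
    (hSre : ∀ i j, Sre i j = if (i : ℕ) = (j : ℕ) then (sre j : ℂ) else 0)
    (Hae : Matrix (Fin Ne) (Fin Na) ℂ) (hHae : Hae = Va * Sae * hcatZero hsa Ra * Ψaᴴ)
    (Hre : Matrix (Fin Ne) (Fin Nr) ℂ) (hHre : Hre = Vr * Sre * hcatZero hsr Rr * Ψrᴴ)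
    (Ta : Matrix (Fin Na) (Fin s) ℂ)
    (hTa : Ta = ((frobNorm Ra⁻¹ : ℝ) : ℂ)⁻¹ • (Ψa * vcatZero hsa Ra⁻¹))
    (Tr : Matrix (Fin Nr) (Fin s) ℂ)
    (hTr : Tr = ((frobNorm Rr⁻¹ : ℝ) : ℂ)⁻¹ • (Ψr * vcatZero hsr Rr⁻¹))
    (pa pr : Fin s → ℝ) (hpa : ∀ i, 0 ≤ pa i) (hpr : ∀ i, 0 ≤ pr i)
    (Da : Matrix (Fin s) (Fin s) ℂ) (hDa : Da = Matrix.diagonal fun i => (Real.sqrt (pa i) : ℂ))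
    (Dr : Matrix (Fin s) (Fin s) ℂ) (hDr : Dr = Matrix.diagonal fun i => (Real.sqrt (pr i) : ℂ))
    (Htil : Matrix (Fin Ne ⊕ Fin Ne) (Fin s) ℂ)
    (hHtil : Htil = Matrix.fromRows (Hae * Ta * Da) (Hre * Tr * Dr)) :
    ∀ σ : ℝ, 0 < σ →
      (1 + ((σ ^ 2 : ℝ) : ℂ)⁻¹ • (Htil * Htilᴴ)).det =
        ((∏ i, (1 + pa i * sae i ^ 2 / (σ ^ 2 * frobNorm Ra⁻¹ ^ 2)
                  + pr i * sre i ^ 2 / (σ ^ 2 * frobNorm Rr⁻¹ ^ 2)) : ℝ) : ℂ) :=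
  gsvd_eavesdropper_determinant_general Ne Na Nr s hse hsa hsr Va hVa Ψa hΨa Vr hVr Ψr hΨr Ra hRa Rr
    hRr sae sre Sae hSae Sre hSre Hae hHae Hre hHre Ta hTa Tr hTr pa pr hpa hpr Da hDa Dr hDr Htil
    hHtil
end
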